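/- Suppose R is a full Suslin tree, D ⊆ ω₁ is a club, and s ≠ t are elements of R of the same height. Then there is no order-preserving injection from R_s↾D to R_t↾D. -/

import Mathlib

noncomputable section

open Set

/-- The first uncountable ordinal `ω₁`. -/
def omega_1 : Ordinal := (Cardinal.aleph 1).ord

/-- A tree structure on a partial order `T`: a height function witnessing that the set of
predecessors of each node is well-ordered, with `ht t` its order type.  The fields say that
the predecessors of a node form a chain, that heights are strictly increasing, and that a
node of height `α` has (necessarily unique) predecessors of every height `ξ < α`. -/
structure TreeHt.{u_1, u_2} (T : Type u_1) [PartialOrder T] where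
  ht : T → Ordinal.{u_2}
  chain_below : ∀ t : T, IsChain (· ≤ ·) {s : T | s < t}
  ht_lt : ∀ {s t : T}, s < t → ht s < ht t
  exists_below : ∀ t : T, ∀ ξ < ht t, ∃ s, s < t ∧ ht s = ξ

variable {T S : Type*} [PartialOrder T] [PartialOrder S]

/-- The `α`-th level of a tree. -/
def TreeHt.level (tr : TreeHt T) (α : Ordinal) : Set T := {t | tr.ht t = α}

/-- An `ℵ₁`-tree: height `ω₁` (all heights are countable and all countable levels are
nonempty) and all levels countable. -/
def IsAleph1Tree (tr : TreeHt T) : Prop :=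
  (∀ t : T, tr.ht t < omega_1) ∧
  (∀ α < omega_1, (tr.level α).Nonempty) ∧
  (∀ α : Ordinal, (tr.level α).Countable)

/-- An Aronszajn tree: an `ℵ₁`-tree with no uncountable chain. -/
def IsAronszajn (tr : TreeHt T) : Prop :=
  IsAleph1Tree tr ∧ ∀ c : Set T, IsChain (· ≤ ·) c → c.Countable

/-- A Suslin tree: an Aronszajn tree with no uncountable antichain. -/
def IsSuslin (tr : TreeHt T) : Prop :=
  IsAronszajn tr ∧
  ∀ a : Set T, (∀ x ∈ a, ∀ y ∈ a, x ≠ y → ¬ (x ≤ y) ∧ ¬ (y ≤ x)) → a.Countable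

/-- The carrier of the derived tree `R_{a 0} ⊗ … ⊗ R_{a n}`: tuples lying above the `a i`
with all coordinates of equal height, ordered coordinatewise. -/
def derivedTreeSet (tr : TreeHt T) {n : ℕ} (a : Fin (n + 1) → T) :
    Set (Fin (n + 1) → T) :=
  {f | (∀ i, a i ≤ f i) ∧ ∃ ε, ∀ i, tr.ht (f i) = ε}

/-- A full Suslin tree: a Suslin tree all of whose derived trees (with their canonical
height function) are Suslin. -/
def IsFullSuslin (tr : TreeHt T) : Prop :=
  IsSuslin tr ∧
  ∀ (n : ℕ) (δ : Ordinal), δ < omega_1 →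
    ∀ a : Fin (n + 1) → T, Function.Injective a → (∀ i, tr.ht (a i) = δ) →
      ∃ dtr : TreeHt ↥(derivedTreeSet tr a),
        (∀ f : ↥(derivedTreeSet tr a), dtr.ht f = tr.ht (f.1 0) - δ) ∧ IsSuslin dtr

/-- A club (closed unbounded) subset of `ω₁`. -/
def IsClubSet (C : Set Ordinal) : Prop :=
  (∀ α ∈ C, α < omega_1) ∧
  (∀ α < omega_1, ∃ β ∈ C, α ≤ β) ∧
  (∀ α < omega_1, α ≠ 0 → (∀ β < α, ∃ γ ∈ C, β < γ ∧ γ < α) → α ∈ C)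

/-- `f` is an order preserving injection of `T↾C` into `S` (only the values of `f` on
`T↾C = {t | ht t ∈ C}` are constrained). -/
def ClubEmbedding (trT : TreeHt T) (trS : TreeHt S) (C : Set Ordinal) (f : T → S) : Prop :=
  (∀ t₁ t₂ : T, trT.ht t₁ ∈ C → trT.ht t₂ ∈ C → t₁ < t₂ → f t₁ < f t₂) ∧
  (∀ t₁ t₂ : T, trT.ht t₁ ∈ C → trT.ht t₂ ∈ C → f t₁ = f t₂ → t₁ = t₂)

/-- `T` club-embeds into `S`. -/
def ClubEmbeds (trT : TreeHt T) (trS : TreeHt S) : Prop :=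
  ∃ C : Set Ordinal, IsClubSet C ∧ ∃ f : T → S, ClubEmbedding trT trS C f

/-- A (downward closed, pruned) subtree of an `ℵ₁`-tree. -/
def IsSubtree (tr : TreeHt T) (S' : Set T) : Prop :=
  (∀ s ∈ S', ∀ t, t ≤ s → t ∈ S') ∧
  (∀ s ∈ S', ∀ β, tr.ht s ≤ β → β < omega_1 → ∃ t ∈ S', s ≤ t ∧ tr.ht t = β)

/-- A club-minimal tree: it club-embeds into each of its subtrees. -/
def ClubMinimal (tr : TreeHt T) : Prop :=
  ∀ S' : Set T, IsSubtree tr S' →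
    ∃ C : Set Ordinal, IsClubSet C ∧ ∃ f : T → T,
      (∀ t, tr.ht t ∈ C → f t ∈ S') ∧ ClubEmbedding tr tr C f

/-- A ladder system on `ω₁`: for each countable limit `α`, `η α` is a cofinal subset of `α`
of order type `ω`. -/
def IsLadderSystem (η : Ordinal → Set Ordinal) : Prop :=
  ∀ α, α < omega_1 → Order.IsSuccLimit α →
    (∀ ξ ∈ η α, ξ < α) ∧ (∀ β < α, ∃ ξ ∈ η α, β < ξ) ∧
    (∀ β < α, {ξ ∈ η α | ξ ≤ β}.Finite)

/-- `f : S' → 2` is an `A`-uniformization of the constant 2-colouring of `η` coded by `c`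
(the colour on the ladder `η α` being constantly `c α`): `S'` is a subtree and for every
node `t` of `S'` of limit height `α`, `f (t↾ξ) = c α` for all but finitely many `ξ ∈ η α`. -/
def IsUniformization (tr : TreeHt T) (η : Ordinal → Set Ordinal)
    (c : Ordinal → Fin 2) (S' : Set T) (f : T → Fin 2) : Prop :=
  IsSubtree tr S' ∧
  ∀ α, α < omega_1 → Order.IsSuccLimit α → ∀ t ∈ S', tr.ht t = α →
    {ξ ∈ η α | ∃ s, s < t ∧ tr.ht s = ξ ∧ f s ≠ c α}.Finite

/-- The linear order `ω₁` (the set of countable ordinals). -/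
abbrev Omega1Type : Type 1 := {o : Ordinal // o < omega_1}

/-- A minimal uncountable linear order: uncountable, and order-embeds into each of its
uncountable suborders. -/
def MinimalUncountableLinearOrder (L : Type*) [LinearOrder L] : Prop :=
  ¬ Countable L ∧ ∀ S' : Set L, ¬ S'.Countable → Nonempty (L ↪o ↥S')


/-!
Cut `D` down to an unbounded set `E ⊆ D` of levels on which `f` does not lower heights (a
closing-off argument, using that `f` is injective and the levels of `R` are countable), and
project `f u` down to the height of `u`. This gives a level preserving monotone map
`g : R_s↾E → R_t`. If above some node `z` the map `g` is constant on every level, its image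
above `z` is an uncountable chain of `R`. Otherwise `g` splits above every node, and choosing
splittings `g u₁ ≠ g u₂` above ever higher nodes, the pairs `(u₁, g u₂)` form an uncountable
antichain of the derived tree `R_s ⊗ R_t`, which is Suslin.
-/

open Ordinal in
theorem omega_1_eq_omega_one : omega_1 = ω₁ :=
  Cardinal.ord_aleph 1

theorem succ_lt_omega_1 {x : Ordinal} (hx : x < omega_1) : Order.succ x < omega_1 :=
  (Cardinal.isSuccLimit_ord (Cardinal.aleph0_le_aleph 1)).succ_lt hx

theorem countable_Iio_of_lt_omega_1 {x : Ordinal} (hx : x < omega_1) : (Iio x).Countable := by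
  rw [← Cardinal.le_aleph0_iff_set_countable, Cardinal.mk_Iio_ordinal, Cardinal.lift_le_aleph0,
    ← Order.lt_succ_iff, Cardinal.succ_aleph0, ← Cardinal.lt_ord]
  exact hx

theorem iSup_lt_omega_1 {ι : Type*} [Countable ι] {f : ι → Ordinal} (hf : ∀ i, f i < omega_1) :
    ⨆ i, f i < omega_1 := by
  rw [omega_1_eq_omega_one] at hf ⊢
  exact Ordinal.iSup_lt_omega_one hf

theorem exists_lt_omega_1_forall_le_of_countable {S : Set Ordinal} (hS : S.Countable)
    (hS_lt : ∀ x ∈ S, x < omega_1) : ∃ γ < omega_1, ∀ x ∈ S, x ≤ γ :=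
  have := hS.to_subtype
  ⟨⨆ x : S, x.1, iSup_lt_omega_1 fun x => hS_lt x.1 x.2,
    fun x hx => Ordinal.le_iSup (fun x : S => x.1) ⟨x, hx⟩⟩

namespace TreeHt

variable (tr : TreeHt T)

theorem ht_mono {x y : T} (h : x ≤ y) : tr.ht x ≤ tr.ht y := by
  rcases h.eq_or_lt with rfl | h
  · exact le_rfl
  · exact (tr.ht_lt h).le

theorem le_of_le_of_le {x y z : T} (hx : x ≤ z) (hy : y ≤ z) (hxy : tr.ht x ≤ tr.ht y) :
    x ≤ y := by
  rcases hy.eq_or_lt with rfl | hy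
  · exact hx
  rcases hx.eq_or_lt with rfl | hx
  · exact absurd (tr.ht_lt hy) hxy.not_gt
  rcases eq_or_ne x y with rfl | hne
  · exact le_rfl
  refine (tr.chain_below z hx hy hne).resolve_right fun hyx => ?_
  exact absurd (tr.ht_lt (hyx.lt_of_ne hne.symm)) hxy.not_gt

theorem eq_of_le_of_le {x y z : T} (hx : x ≤ z) (hy : y ≤ z) (hxy : tr.ht x = tr.ht y) :
    x = y :=
  (tr.le_of_le_of_le hx hy hxy.le).antisymm (tr.le_of_le_of_le hy hx hxy.ge)

theorem exists_le_ht_eq {x : T} {α : Ordinal} (hα : α ≤ tr.ht x) :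
    ∃ y ≤ x, tr.ht y = α := by
  rcases hα.eq_or_lt with rfl | hα
  · exact ⟨x, le_rfl, rfl⟩
  · obtain ⟨y, hyx, rfl⟩ := tr.exists_below x α hα
    exact ⟨y, hyx.le, rfl⟩

open Classical in
/-- The predecessor `x↾α` of `x` at height `α`; junk value `x` when `tr.ht x < α`. -/
def proj (x : T) (α : Ordinal) : T :=
  if h : ∃ y ≤ x, tr.ht y = α then h.choose else x

theorem proj_le {x : T} {α : Ordinal} (hα : α ≤ tr.ht x) : tr.proj x α ≤ x := by
  rw [proj, dif_pos (tr.exists_le_ht_eq hα)]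
  exact (tr.exists_le_ht_eq hα).choose_spec.1

theorem ht_proj {x : T} {α : Ordinal} (hα : α ≤ tr.ht x) : tr.ht (tr.proj x α) = α := by
  rw [proj, dif_pos (tr.exists_le_ht_eq hα)]
  exact (tr.exists_le_ht_eq hα).choose_spec.2

theorem proj_le_proj {x y : T} {α β : Ordinal} (hxy : x ≤ y) (hαβ : α ≤ β)
    (hα : α ≤ tr.ht x) (hβ : β ≤ tr.ht y) : tr.proj x α ≤ tr.proj y β :=
  tr.le_of_le_of_le ((tr.proj_le hα).trans hxy) (tr.proj_le hβ)
    (by rw [tr.ht_proj hα, tr.ht_proj hβ]; exact hαβ)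

theorem countable_setOf_ht_le (hlev : ∀ α, (tr.level α).Countable) {x : Ordinal}
    (hx : x < omega_1) : {y | tr.ht y ≤ x}.Countable := by
  have : {y | tr.ht y ≤ x} = ⋃ α ∈ Iic x, tr.level α := by
    ext y; simp [level]
  rw [this, ← Order.Iio_succ]
  exact (countable_Iio_of_lt_omega_1 (succ_lt_omega_1 hx)).biUnion fun α _ => hlev α

def IsPruned : Prop :=
  ∀ x : T, ∀ β, tr.ht x ≤ β → β < omega_1 → ∃ y, x ≤ y ∧ tr.ht y = β

end TreeHt

namespace IsFullSuslin

variable {tr : TreeHt T}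

theorem isPruned (hR : IsFullSuslin tr) : tr.IsPruned := by
  intro x β hxβ hβ
  -- the derived tree `R_x` is an `ℵ₁`-tree, so its level `β - ht x` is nonempty
  obtain ⟨dtr, hdtr_ht, hdtr⟩ := hR.2 0 (tr.ht x) (hR.1.1.1.1 x) (fun _ => x)
    (fun i j _ => Subsingleton.elim (α := Fin 1) i j) (fun _ => rfl)
  obtain ⟨y, hy⟩ := hdtr.1.1.2.1 (β - tr.ht x) ((Ordinal.sub_le_self β _).trans_lt hβ)
  have hxy : x ≤ y.1 0 := y.2.1 0
  refine ⟨y.1 0, hxy, ?_⟩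
  have hsub : tr.ht (y.1 0) - tr.ht x = β - tr.ht x := (hdtr_ht y).symm.trans hy
  rw [← Ordinal.add_sub_cancel_of_le (tr.ht_mono hxy), hsub, Ordinal.add_sub_cancel_of_le hxβ]

theorem countable_of_isAntichain_prod (hR : IsFullSuslin tr) {s t : T} (hst : s ≠ t)
    (hht : tr.ht s = tr.ht t) {A : Set (T × T)}
    (hA : ∀ p ∈ A, s ≤ p.1 ∧ t ≤ p.2 ∧ tr.ht p.1 = tr.ht p.2)
    (hanti : IsAntichain (· ≤ ·) A) : A.Countable := by
  let e := (OrderIso.finTwoArrowIso T).symm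
  have he : e '' A ⊆ derivedTreeSet tr ![s, t] := by
    rintro _ ⟨p, hp, rfl⟩
    obtain ⟨hs, ht, hp_ht⟩ := hA p hp
    exact ⟨Fin.forall_fin_two.2 ⟨hs, ht⟩, tr.ht p.1, Fin.forall_fin_two.2 ⟨rfl, hp_ht.symm⟩⟩
  obtain ⟨dtr, -, hdtr⟩ := hR.2 1 (tr.ht s) (hR.1.1.1.1 s) ![s, t]
    (by simpa [Function.Injective, Fin.forall_fin_two] using ⟨hst, hst.symm⟩)
    (Fin.forall_fin_two.2 ⟨rfl, hht.symm⟩)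
  have hB : (Subtype.val ⁻¹' (e '' A) : Set (derivedTreeSet tr ![s, t])).Countable := by
    refine hdtr.2 _ fun x ⟨p, hp, hpx⟩ y ⟨q, hq, hqy⟩ hxy => ?_
    have hpq : p ≠ q := by rintro rfl; exact hxy (Subtype.ext (hpx.symm.trans hqy))
    rw [← Subtype.coe_le_coe, ← Subtype.coe_le_coe, ← hpx, ← hqy, e.le_iff_le, e.le_iff_le]
    exact ⟨hanti hp hq hpq, hanti hq hp hpq.symm⟩
  have := hB.image Subtype.val
  rw [Subtype.image_preimage_coe, inter_eq_right.2 he] at this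
  exact countable_of_injective_of_countable_image e.injective.injOn this

end IsFullSuslin

theorem IsClubSet.exists_gt_forall_lt {D : Set Ordinal} (hD : IsClubSet D)
    {B : Ordinal → Ordinal → Prop} (hB_mono : ∀ ⦃x x' y y'⦄, x' ≤ x → y ≤ y' → B x y → B x' y')
    (hB : ∀ x < omega_1, ∃ y < omega_1, B x y) {γ : Ordinal} (hγ : γ < omega_1) :
    ∃ α ∈ D, γ < α ∧ ∀ x < α, B x α := by
  have hnext : ∀ x, ∃ y, x < omega_1 → y ∈ D ∧ x < y ∧ B x y := by
    intro x
    by_cases hx : x < omega_1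
    · obtain ⟨y, hy, hxy⟩ := hB x hx
      obtain ⟨z, hzD, hz⟩ := hD.2.1 _ (max_lt (succ_lt_omega_1 hx) hy)
      exact ⟨z, fun _ => ⟨hzD, (Order.lt_succ x).trans_le ((le_max_left _ _).trans hz),
        hB_mono le_rfl ((le_max_right _ _).trans hz) hxy⟩⟩
    · exact ⟨0, fun h => absurd h hx⟩
  choose next hnext using hnext
  set a : ℕ → Ordinal := fun n => next^[n] γ
  have ha_succ : ∀ n, a (n + 1) = next (a n) := fun n => Function.iterate_succ_apply' next n γ
  have ha_lt : ∀ n, a n < omega_1 := by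
    intro n
    induction n with
    | zero => exact hγ
    | succ n ih => rw [ha_succ]; exact hD.1 _ (hnext _ ih).1
  have ha : ∀ n, a (n + 1) ∈ D ∧ a n < a (n + 1) ∧ B (a n) (a (n + 1)) := fun n => by
    rw [ha_succ]; exact hnext _ (ha_lt n)
  have hle : ∀ n, a n ≤ ⨆ n, a n := Ordinal.le_iSup a
  have hγα : γ < ⨆ n, a n := (ha 0).2.1.trans_le (hle 1)
  refine ⟨⨆ n, a n, hD.2.2 _ (iSup_lt_omega_1 ha_lt) (zero_le.trans_lt hγα).ne' ?_, hγα, ?_⟩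
  · intro β hβ
    obtain ⟨n, hn⟩ := Ordinal.lt_iSup_iff.1 hβ
    exact ⟨a (n + 1), (ha n).1, hn.trans (ha n).2.1, (ha (n + 1)).2.1.trans_le (hle _)⟩
  · intro x hx
    obtain ⟨n, hn⟩ := Ordinal.lt_iSup_iff.1 hx
    exact hB_mono hn.le (hle (n + 1)) (ha n).2.2

theorem exists_isAntichain_not_countable {X : Type*} [Preorder X] (h : X → Ordinal)
    (hh : ∀ x, h x < omega_1) {A : Set X}
    (hA : ∀ γ < omega_1, ∃ y ∈ A, ∀ x ∈ A, h x ≤ γ → ¬ x ≤ y ∧ ¬ y ≤ x) :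
    ∃ S ⊆ A, IsAntichain (· ≤ ·) S ∧ ¬ S.Countable := by
  obtain ⟨S, ⟨hSA, hS⟩, hmax⟩ := zorn_subset {S | S ⊆ A ∧ IsAntichain (· ≤ ·) S}
    fun c hc hchain => ⟨⋃₀ c, ⟨sUnion_subset fun s hs => (hc hs).1,
      (pairwise_sUnion hchain.directedOn).2 fun s hs => (hc hs).2⟩,
      fun s hs => subset_sUnion_of_mem hs⟩
  refine ⟨S, hSA, hS, fun hS_count => ?_⟩
  -- a countable antichain lies below some height `γ`, and the `y` given for `γ` extends it
  obtain ⟨γ, hγ, hle⟩ := exists_lt_omega_1_forall_le_of_countable (hS_count.image h)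
    (by rintro _ ⟨x, -, rfl⟩; exact hh x)
  obtain ⟨y, hyA, hy⟩ := hA γ hγ
  have hy' : ∀ x ∈ S, ¬ x ≤ y ∧ ¬ y ≤ x := fun x hx => hy x (hSA hx) (hle _ ⟨x, hx, rfl⟩)
  have hyS : y ∉ S := fun hyS => (hy' y hyS).1 le_rfl
  have hins : insert y S ⊆ S := hmax ⟨insert_subset hyA hSA,
    hS.insert (fun x hx _ => (hy' x hx).1) (fun x hx _ => (hy' x hx).2)⟩ (subset_insert y S)
  exact hyS (hins (mem_insert y S))

theorem IsClubSet.exists_gt_forall_le_ht_apply (trT : TreeHt T) (trS : TreeHt S)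
    (hT : ∀ u, trT.ht u < omega_1) (hS : ∀ α, (trS.level α).Countable) {D : Set Ordinal}
    (hD : IsClubSet D) {X : Set T} {f : T → S} (hf : InjOn f X) {γ : Ordinal}
    (hγ : γ < omega_1) : ∃ α ∈ D, γ < α ∧ ∀ u ∈ X, trT.ht u = α → α ≤ trS.ht (f u) := by
  have hB : ∀ x < omega_1, ∃ y < omega_1, ∀ u ∈ X, y ≤ trT.ht u → x < trS.ht (f u) := by
    intro x hx
    -- `f` is injective, so only countably many nodes of `X` are sent to heights `≤ x`
    have hcount : {u ∈ X | trS.ht (f u) ≤ x}.Countable :=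
      MapsTo.countable_of_injOn (t := {w | trS.ht w ≤ x}) (fun u hu => hu.2)
        (hf.mono fun u hu => hu.1) (trS.countable_setOf_ht_le hS hx)
    obtain ⟨β, hβ, hle⟩ := exists_lt_omega_1_forall_le_of_countable (hcount.image trT.ht)
      (by rintro _ ⟨u, -, rfl⟩; exact hT u)
    refine ⟨Order.succ β, succ_lt_omega_1 hβ, fun u hu hβu => lt_of_not_ge fun hfu => ?_⟩
    exact (Order.lt_succ β).not_ge (hβu.trans (hle _ ⟨u, ⟨hu, hfu⟩, rfl⟩))
  obtain ⟨α, hαD, hγα, hα⟩ := hD.exists_gt_forall_lt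
    (fun x x' y y' hx hy hB u hu hyu => hx.trans_lt (hB u hu (hy.trans hyu))) hB hγ
  exact ⟨α, hαD, hγα, fun u hu hu_ht => le_of_forall_lt fun x hx => hα x hx u hu hu_ht.ge⟩

/-- `g` is level preserving and monotone on `R_s↾E`. -/
def TreeHt.IsLevelMonoOn (tr : TreeHt T) (s : T) (E : Set Ordinal) (g : T → T) : Prop :=
  (∀ u, s ≤ u → tr.ht u ∈ E → tr.ht (g u) = tr.ht u) ∧
  (∀ u v, s ≤ u → tr.ht u ∈ E → tr.ht v ∈ E → u ≤ v → g u ≤ g v)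

theorem TreeHt.isLevelMonoOn_proj (tr : TreeHt T) {s : T} {E : Set Ordinal} {f : T → T}
    (hf_mono : ∀ u v, s ≤ u → tr.ht u ∈ E → tr.ht v ∈ E → u < v → f u < f v)
    (hf_ht : ∀ u, s ≤ u → tr.ht u ∈ E → tr.ht u ≤ tr.ht (f u)) :
    tr.IsLevelMonoOn s E fun u => tr.proj (f u) (tr.ht u) := by
  refine ⟨fun u hsu huE => tr.ht_proj (hf_ht u hsu huE), fun u v hsu huE hvE huv => ?_⟩
  rcases huv.eq_or_lt with rfl | huv
  · exact le_rfl
  exact tr.proj_le_proj (hf_mono u v hsu huE hvE huv).le (tr.ht_mono huv.le)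
    (hf_ht u hsu huE) (hf_ht v (hsu.trans huv.le) hvE)

namespace TreeHt.IsLevelMonoOn

variable {tr : TreeHt T} {s t z : T} {E : Set Ordinal} {g : T → T}

theorem anti (hg : tr.IsLevelMonoOn s E g) (hsz : s ≤ z) : tr.IsLevelMonoOn z E g :=
  ⟨fun u hu => hg.1 u (hsz.trans hu), fun u v hu => hg.2 u v (hsz.trans hu)⟩

theorem exists_ne_of_isAronszajn (hA : IsAronszajn tr) (hP : tr.IsPruned)
    (hE_lt : ∀ α ∈ E, α < omega_1) (hE : ∀ γ < omega_1, ∃ α ∈ E, γ < α)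
    (hg : tr.IsLevelMonoOn z E g) :
    ∃ u₁ u₂, z ≤ u₁ ∧ z ≤ u₂ ∧ tr.ht u₁ ∈ E ∧ tr.ht u₁ = tr.ht u₂ ∧ g u₁ ≠ g u₂ := by
  by_contra! hconst
  let X := {u | z ≤ u ∧ tr.ht u ∈ E}
  have hle : ∀ u₁ ∈ X, ∀ u₂ ∈ X, tr.ht u₁ ≤ tr.ht u₂ → g u₁ ≤ g u₂ := by
    rintro u₁ ⟨hz₁, hE₁⟩ u₂ ⟨hz₂, hE₂⟩ h
    obtain ⟨v, hv, hv_ht⟩ := hP u₁ _ h (hE_lt _ hE₂)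
    calc g u₁ ≤ g v := hg.2 u₁ v hz₁ hE₁ (hv_ht ▸ hE₂) hv
      _ = g u₂ := hconst v u₂ (hz₁.trans hv) hz₂ (hv_ht ▸ hE₂) hv_ht
  have hchain : IsChain (· ≤ ·) (g '' X) := by
    rintro _ ⟨u₁, hu₁, rfl⟩ _ ⟨u₂, hu₂, rfl⟩ -
    rcases le_total (tr.ht u₁) (tr.ht u₂) with h | h
    · exact Or.inl (hle u₁ hu₁ u₂ hu₂ h)
    · exact Or.inr (hle u₂ hu₂ u₁ hu₁ h)
  obtain ⟨γ, hγ, hγ_ge⟩ := exists_lt_omega_1_forall_le_of_countable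
    ((hA.2 _ hchain).image tr.ht) (by rintro _ ⟨w, -, rfl⟩; exact hA.1.1 w)
  obtain ⟨α, hαE, hα⟩ := hE _ (max_lt hγ (hA.1.1 z))
  obtain ⟨u, hzu, hu_ht⟩ := hP z α ((le_max_right _ _).trans hα.le) (hE_lt α hαE)
  have hu : u ∈ X := ⟨hzu, hu_ht ▸ hαE⟩
  have := hγ_ge _ ⟨g u, ⟨u, hu, rfl⟩, rfl⟩
  rw [hg.1 u hzu hu.2, hu_ht] at this
  exact ((le_max_left _ _).trans_lt hα).not_ge this


theorem exists_forall_eq_of_isFullSuslin (hR : IsFullSuslin tr) (hst : s ≠ t)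
    (hht : tr.ht s = tr.ht t) (hg : tr.IsLevelMonoOn s E g)
    (hgt : ∀ u, s ≤ u → tr.ht u ∈ E → t ≤ g u) :
    ∃ z, s ≤ z ∧ ∀ u₁ u₂, z ≤ u₁ → z ≤ u₂ → tr.ht u₁ ∈ E → tr.ht u₁ = tr.ht u₂ →
      g u₁ = g u₂ := by
  by_contra! hsplit
  -- the pairs `(u₁, g u₂)` of `R_s ⊗ R_t` coming from splittings of `g`
  let A : Set (T × T) := {p | ∃ u₁ u₂, s ≤ u₁ ∧ s ≤ u₂ ∧ tr.ht u₁ ∈ E ∧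
    tr.ht u₁ = tr.ht u₂ ∧ g u₁ ≠ g u₂ ∧ p = (u₁, g u₂)}
  have hA : ∀ p ∈ A, s ≤ p.1 ∧ t ≤ p.2 ∧ tr.ht p.1 = tr.ht p.2 := by
    rintro _ ⟨u₁, u₂, hs₁, hs₂, hE₁, h₁₂, -, rfl⟩
    exact ⟨hs₁, hgt u₂ hs₂ (h₁₂ ▸ hE₁), by rw [hg.1 u₂ hs₂ (h₁₂ ▸ hE₁), h₁₂]⟩
  have hA_sep : ∀ γ < omega_1, ∃ q ∈ A, ∀ p ∈ A, tr.ht p.1 ≤ γ → ¬ p ≤ q ∧ ¬ q ≤ p := by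
    intro γ hγ
    obtain ⟨z, hsz, hz⟩ := hR.isPruned s _ (le_max_right (Order.succ γ) _)
      (max_lt (succ_lt_omega_1 hγ) (hR.1.1.1.1 s))
    have hγz : γ < tr.ht z := (Order.lt_succ γ).trans_le (hz ▸ le_max_left _ _)
    obtain ⟨u₁, u₂, hz₁, hz₂, hE₁, h₁₂, hne⟩ := hsplit z hsz
    refine ⟨(u₁, g u₂), ⟨u₁, u₂, hsz.trans hz₁, hsz.trans hz₂, hE₁, h₁₂, hne, rfl⟩, ?_⟩
    rintro _ ⟨a₁, a₂, hs₁, hs₂, hEa, ha₁₂, hne_a, rfl⟩ hγa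
    refine ⟨fun hle => hne_a ?_, fun hle => ?_⟩
    · -- `a₁` lies below the splitting node `z`, hence below `u₂`
      have ha₁z : a₁ ≤ z := tr.le_of_le_of_le (Prod.mk_le_mk.1 hle).1 hz₁ (hγa.trans hγz.le)
      exact tr.eq_of_le_of_le (hg.2 a₁ u₂ hs₁ hEa (h₁₂ ▸ hE₁) (ha₁z.trans hz₂))
        (Prod.mk_le_mk.1 hle).2 (by rw [hg.1 a₁ hs₁ hEa, hg.1 a₂ hs₂ (ha₁₂ ▸ hEa), ha₁₂])
    · exact (hγa.trans_lt hγz).not_ge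
        ((tr.ht_mono hz₁).trans (tr.ht_mono (Prod.mk_le_mk.1 hle).1))
  obtain ⟨S, hSA, hS, hS_count⟩ := exists_isAntichain_not_countable (fun p : T × T => tr.ht p.1)
    (fun p => hR.1.1.1.1 p.1) hA_sep
  exact hS_count (hR.countable_of_isAntichain_prod hst hht (fun p hp => hA p (hSA hp)) hS)

end TreeHt.IsLevelMonoOn

theorem IsFullSuslin.not_isLevelMonoOn {tr : TreeHt T} (hR : IsFullSuslin tr) {s t : T}
    (hst : s ≠ t) (hht : tr.ht s = tr.ht t) {E : Set Ordinal} (hE_lt : ∀ α ∈ E, α < omega_1)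
    (hE : ∀ γ < omega_1, ∃ α ∈ E, γ < α) {g : T → T}
    (hgt : ∀ u, s ≤ u → tr.ht u ∈ E → t ≤ g u) : ¬ tr.IsLevelMonoOn s E g := fun hg => by
  obtain ⟨z, hsz, hconst⟩ := hg.exists_forall_eq_of_isFullSuslin hR hst hht hgt
  obtain ⟨u₁, u₂, hz₁, hz₂, hE₁, h₁₂, hne⟩ :=
    (hg.anti hsz).exists_ne_of_isAronszajn hR.1.1 hR.isPruned hE_lt hE
  exact hne (hconst u₁ u₂ hz₁ hz₂ hE₁ h₁₂)

/-- If `R` is full Suslin, `D ⊆ ω₁` is a club and `s ≠ t` are elements of `R` of the same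
height, then there is no order-preserving injection from `R_s↾D` to `R_t↾D`. -/
theorem statement2 (R : Type*) [PartialOrder R] (trR : TreeHt R) (hR : IsFullSuslin trR)
    (D : Set Ordinal) (hD : IsClubSet D) (s t : R) (hne : s ≠ t)
    (hht : trR.ht s = trR.ht t) :
    ¬ ∃ f : R → R,
      (∀ u, s ≤ u → trR.ht u ∈ D → t ≤ f u ∧ trR.ht (f u) ∈ D) ∧
      (∀ u v, s ≤ u → s ≤ v → trR.ht u ∈ D → trR.ht v ∈ D → u < v → f u < f v) ∧
      (∀ u v, s ≤ u → s ≤ v → trR.ht u ∈ D → trR.ht v ∈ D → f u = f v → u = v) := by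
  rintro ⟨f, hf_mem, hf_mono, hf_inj⟩
  let X := {u | s ≤ u ∧ trR.ht u ∈ D}
  let E := {α ∈ D | ∀ u ∈ X, trR.ht u = α → α ≤ trR.ht (f u)}
  have hE : ∀ γ < omega_1, ∃ α ∈ E, γ < α := fun γ hγ => by
    obtain ⟨α, hαD, hγα, hα⟩ := hD.exists_gt_forall_le_ht_apply trR trR hR.1.1.1.1
      hR.1.1.1.2.2 (X := X) (fun u hu v hv => hf_inj u v hu.1 hv.1 hu.2 hv.2) hγ
    exact ⟨α, ⟨hαD, hα⟩, hγα⟩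
  have hf_ht : ∀ u, s ≤ u → trR.ht u ∈ E → trR.ht u ≤ trR.ht (f u) :=
    fun u hsu huE => huE.2 u ⟨hsu, huE.1⟩ rfl
  refine hR.not_isLevelMonoOn hne hht (fun α hα => hD.1 α hα.1) hE (fun u hsu huE => ?_)
    (trR.isLevelMonoOn_proj (fun u v hsu huE hvE huv =>
      hf_mono u v hsu (hsu.trans huv.le) huE.1 hvE.1 huv) hf_ht)
  refine trR.le_of_le_of_le (hf_mem u hsu huE.1).1 (trR.proj_le (hf_ht u hsu huE)) ?_
  rw [trR.ht_proj (hf_ht u hsu huE), ← hht]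
  exact trR.ht_mono hsu
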